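/- Let (R, 𝔪) be a (not necessarily Noetherian) commutative local ring and R ⊆ S an extension of commutative rings. Then the strict closure R* of R in S satisfies R* ⊆ R + 𝔪S. In particular, if 𝔪S ⊆ R then R is strictly closed in S. -/

import Mathlib

/-!
Let `N = R + 𝔪S` and suppose `α ∈ R*` lies outside `N`. Since `S ⧸ N` is a vector space over the
residue field `k`, there is an `R`-linear `ψ : S → k` vanishing on `N` with `ψ α ≠ 0`. Applying
`ψ ⊗ id` to `α ⊗ 1 = 1 ⊗ α` gives `ψ α ⊗ 1 = ψ 1 ⊗ α = 0` in `k ⊗[R] S ≅ S ⧸ 𝔪S`, so the image of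
a unit of `R` lies in `𝔪S`. Then `𝔪S = S ⊆ N`, a contradiction.
-/

open scoped TensorProduct

def strictClosure (R : Type*) [CommRing R] (S : Type*) [CommRing S] [Algebra R S] : Set S :=
  {α : S | α ⊗ₜ[R] (1 : S) = (1 : S) ⊗ₜ[R] α}

open IsLocalRing

section

variable {R S : Type*} [CommRing R] [CommRing S] [Algebra R S]

theorem algebraMap_mem_strictClosure (r : R) : algebraMap R S r ∈ strictClosure R S := by
  rw [strictClosure, Set.mem_ofPred_eq, Algebra.algebraMap_eq_smul_one, TensorProduct.smul_tmul]

theorem apply_tmul_one_eq_zero_of_mem_strictClosure {M : Type*} [AddCommGroup M] [Module R M]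
    {α : S} (hα : α ∈ strictClosure R S) (f : S →ₗ[R] M) (hf : f 1 = 0) :
    f α ⊗ₜ[R] (1 : S) = 0 := by
  simpa [hf] using congrArg (f.rTensor S) hα

theorem Ideal.Quotient.mk_tmul_one_eq_zero_iff (I : Ideal R) (c : R) :
    Ideal.Quotient.mk I c ⊗ₜ[R] (1 : S) = 0 ↔ algebraMap R S c ∈ I.map (algebraMap R S) := by
  rw [← (TensorProduct.quotTensorEquivQuotSMul S I).map_eq_zero_iff,
    TensorProduct.quotTensorEquivQuotSMul_mk_tmul, Submodule.Quotient.mk_eq_zero,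
    Ideal.smul_top_eq_map, Submodule.restrictScalars_mem, Algebra.smul_def, mul_one]

end

theorem IsLocalRing.exists_linearMap_residueField_ne_zero {R M : Type*} [CommRing R]
    [IsLocalRing R] [AddCommGroup M] [Module R M] {N : Submodule R M}
    (hN : maximalIdeal R • (⊤ : Submodule R M) ≤ N) {x : M} (hx : x ∉ N) :
    ∃ f : M →ₗ[R] ResidueField R, N ≤ LinearMap.ker f ∧ f x ≠ 0 := by
  have hT : Module.IsTorsionBySet R (M ⧸ N) (maximalIdeal R : Set R) :=
    (Module.isTorsionBySet_quotient_iff N _).mpr fun _ _ hr =>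
      hN (Submodule.smul_mem_smul hr Submodule.mem_top)
  let : Module (ResidueField R) (M ⧸ N) := hT.module
  have : IsScalarTower R (ResidueField R) (M ⧸ N) := hT.isScalarTower
  obtain ⟨φ, hφ⟩ := Module.Projective.exists_dual_ne_zero (ResidueField R)
    (x := N.mkQ x) (by simpa using hx)
  refine ⟨(φ.restrictScalars R).comp N.mkQ, fun y hy => ?_, hφ⟩
  simp [(Submodule.Quotient.mk_eq_zero N).mpr hy]

theorem strictClosure_subset_range_sup_map_maximalIdeal (R S : Type*) [CommRing R] [IsLocalRing R]
    [CommRing S] [Algebra R S] :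
    strictClosure R S ⊆ (LinearMap.range (Algebra.linearMap R S) ⊔
      ((maximalIdeal R).map (algebraMap R S)).restrictScalars R : Submodule R S) := by
  intro α hα
  by_contra hαN
  set 𝔪S := (maximalIdeal R).map (algebraMap R S)
  obtain ⟨ψ, hψN, hψα⟩ := exists_linearMap_residueField_ne_zero
    (N := LinearMap.range (Algebra.linearMap R S) ⊔ 𝔪S.restrictScalars R)
    (by rw [Ideal.smul_top_eq_map]; exact le_sup_right) hαN
  have hψ1 : ψ 1 = 0 := hψN (Submodule.mem_sup_left ⟨1, (algebraMap R S).map_one⟩)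
  obtain ⟨c, hc⟩ := Ideal.Quotient.mk_surjective (ψ α)
  have hcS : algebraMap R S c ∈ 𝔪S := by
    rw [← Ideal.Quotient.mk_tmul_one_eq_zero_iff]
    exact hc ▸ apply_tmul_one_eq_zero_of_mem_strictClosure hα ψ hψ1
  have hcu : IsUnit c := by
    by_contra hc𝔪
    exact hψα (hc ▸ Ideal.Quotient.eq_zero_iff_mem.mpr hc𝔪)
  have h𝔪S : 𝔪S = ⊤ := Ideal.eq_top_of_isUnit_mem _ hcS (hcu.map (algebraMap R S))
  exact hαN (Submodule.mem_sup_right (by simp [h𝔪S]))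

theorem strictClosure_subset_add_maximalIdeal_smul_general (R S : Type*) [CommRing R] [IsLocalRing R]
    [CommRing S] [Algebra R S] :
    strictClosure R S ⊆
      {s : S | ∃ r : R, ∃ m ∈ Ideal.map (algebraMap R S) (IsLocalRing.maximalIdeal R),
        s = algebraMap R S r + m} ∧
    ((Ideal.map (algebraMap R S) (IsLocalRing.maximalIdeal R) : Set S) ⊆
        Set.range (algebraMap R S) →
      strictClosure R S = Set.range (algebraMap R S)) := by
  have hsub : strictClosure R S ⊆
      {s : S | ∃ r : R, ∃ m ∈ Ideal.map (algebraMap R S) (maximalIdeal R),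
        s = algebraMap R S r + m} := fun α hα => by
    obtain ⟨_, ⟨r, rfl⟩, m, hm, hα⟩ :=
      Submodule.mem_sup.mp (strictClosure_subset_range_sup_map_maximalIdeal R S hα)
    exact ⟨r, m, hm, hα.symm⟩
  refine ⟨hsub, fun h𝔪S => Set.Subset.antisymm (fun α hα => ?_) ?_⟩
  · obtain ⟨r, m, hm, rfl⟩ := hsub hα
    obtain ⟨r', hr'⟩ := h𝔪S hm
    exact ⟨r + r', by rw [map_add, hr']⟩
  · rintro _ ⟨r, rfl⟩
    exact algebraMap_mem_strictClosure r

/-- If `(R, 𝔪)` is local (not necessarily Noetherian) and `S/R` is an extension of rings,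
then `R* ⊆ R + 𝔪S`; in particular, if `𝔪S ⊆ R` then `R` is strictly closed in `S`. -/
theorem strictClosure_subset_add_maximalIdeal_smul (R S : Type*) [CommRing R] [IsLocalRing R]
    [CommRing S] [Algebra R S] (hinj : Function.Injective (algebraMap R S)) :
    strictClosure R S ⊆
      {s : S | ∃ r : R, ∃ m ∈ Ideal.map (algebraMap R S) (IsLocalRing.maximalIdeal R),
        s = algebraMap R S r + m} ∧
    ((Ideal.map (algebraMap R S) (IsLocalRing.maximalIdeal R) : Set S) ⊆
        Set.range (algebraMap R S) →
      strictClosure R S = Set.range (algebraMap R S)) :=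
  strictClosure_subset_add_maximalIdeal_smul_general R S
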